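/- arXiv:2211.16823 — 3 statements merged into one kernel-verified Lean document; each statement's English description precedes it below -/
import Mathlib

section
/- Let q be a prime power, let F be a finite field with q^2 elements, let ζ ∈ F be an element of multiplicative order q+1, and let a, b ∈ F be nonzero. Then for every triple (α, β, γ) ∈ F^3 with (α, β, γ) ≠ (0,0,0), the number of pairs (i, j) ∈ (Z/(q+1)Z) × (Z/(q+1)Z) with α + β ζ^i a + γ ζ^j b = 0 is at most q+1. Consequently, the F-linear map from F^3 to the space of F-valued functions on S = { (ζ^i a, ζ^j b) : 0 ≤ i, j ≤ q } sending (α, β, γ) to the function (x, y) ↦ α + β x + γ y is injective, and every nonzero function in its image is nonzero at at least (q+1)^2 − (q+1) = q(q+1) points of S. -/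
/-- For a prime power `q`, `F = F_{q^2}`, `ζ ∈ F` of multiplicative order `q+1` and nonzero
`a, b ∈ F`: a nonzero function `α + βx + γy` vanishes at at most `q+1` of the points
`(ζ^i a, ζ^j b)`; hence evaluation of these functions on the orbit `S` is an injective
`F`-linear map and every nonzero function in its image is nonzero at at least `q(q+1)`
points of `S`. -/
theorem fermat_code_injectivity_and_min_weight
    (q : ℕ) (hq : ∃ p n : ℕ, p.Prime ∧ 0 < n ∧ q = p ^ n)
    (F : Type*) [Field F] [Fintype F] (hcard : Fintype.card F = q ^ 2)
    (ζ : F) (hζ : orderOf ζ = q + 1) (a b : F) (ha : a ≠ 0) (hb : b ≠ 0) :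
    (∀ α β γ : F, (α, β, γ) ≠ (0, 0, 0) →
        {ij : ZMod (q + 1) × ZMod (q + 1) |
          α + β * (ζ ^ ij.1.val * a) + γ * (ζ ^ ij.2.val * b) = 0}.ncard ≤ q + 1) ∧
      (∃ Φ : (F × F × F) →ₗ[F]
          ({p : F × F | ∃ i j : ℕ, p = (ζ ^ i * a, ζ ^ j * b)} → F),
        (∀ (v : F × F × F) (p : {p : F × F | ∃ i j : ℕ, p = (ζ ^ i * a, ζ ^ j * b)}),
          Φ v p = v.1 + v.2.1 * (p : F × F).1 + v.2.2 * (p : F × F).2) ∧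
        Function.Injective Φ) ∧
      ∀ α β γ : F, (α, β, γ) ≠ (0, 0, 0) →
        q * (q + 1) ≤
          {p : F × F | (∃ i j : ℕ, p = (ζ ^ i * a, ζ ^ j * b)) ∧
            α + β * p.1 + γ * p.2 ≠ 0}.ncard := by
  have hq2 : 2 ≤ q := by
    obtain ⟨p, n, hp, hn, rfl⟩ := hq
    exact le_trans hp.two_le (Nat.le_self_pow hn.ne' p)
  haveI : NeZero (q + 1) := ⟨Nat.succ_ne_zero q⟩
  have hζ1 : ζ ^ (q + 1) = 1 := by rw [← hζ]; exact pow_orderOf_eq_one ζ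
  have hζ0 : ζ ≠ 0 := by
    intro h
    rw [h, zero_pow (Nat.succ_ne_zero q)] at hζ1
    exact zero_ne_one hζ1
  -- injectivity of m ↦ ζ ^ m for m < q + 1
  have hpownat : ∀ m n : ℕ, m < q + 1 → n < q + 1 → ζ ^ m = ζ ^ n → m = n := by
    have key : ∀ m n : ℕ, m ≤ n → n < q + 1 → ζ ^ m = ζ ^ n → m = n := by
      intro m n hmn hn h
      by_contra hne
      have h1 : ζ ^ m * ζ ^ (n - m) = ζ ^ m * 1 := by
        rw [← pow_add, Nat.add_sub_cancel' hmn, mul_one, h]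
      have h2 : ζ ^ (n - m) = 1 := mul_left_cancel₀ (pow_ne_zero m hζ0) h1
      have h3 : orderOf ζ ≤ n - m :=
        orderOf_le_of_pow_eq_one (by omega) h2
      omega
    intro m n hm hn h
    rcases le_total m n with hle | hle
    · exact key m n hle hn h
    · exact (key n m hle hm h.symm).symm
  have hmod : ∀ i : ℕ, ζ ^ (i % (q + 1)) = ζ ^ i := by
    intro i; rw [← hζ]; exact pow_mod_orderOf ζ i
  have hpow : ∀ i j : ZMod (q + 1), ζ ^ i.val = ζ ^ j.val → i = j := by
    intro i j h
    exact ZMod.val_injective _ (hpownat i.val j.val (ZMod.val_lt i) (ZMod.val_lt j) h)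
  -- Part 1
  have part1 : ∀ α β γ : F, (α, β, γ) ≠ (0, 0, 0) →
      {ij : ZMod (q + 1) × ZMod (q + 1) |
        α + β * (ζ ^ ij.1.val * a) + γ * (ζ ^ ij.2.val * b) = 0}.ncard ≤ q + 1 := by
    intro α β γ hne
    set Z : Set (ZMod (q + 1) × ZMod (q + 1)) :=
      {ij | α + β * (ζ ^ ij.1.val * a) + γ * (ζ ^ ij.2.val * b) = 0} with hZ
    have hcardZMod : (Set.univ : Set (ZMod (q + 1))).ncard = q + 1 := by
      rw [Set.ncard_univ, Nat.card_zmod]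
    by_cases hγ : γ = 0
    · by_cases hβ : β = 0
      · have hα : α ≠ 0 := by
          intro h; exact hne (by rw [h, hβ, hγ])
        have : Z = ∅ := by
          ext ij
          simp only [hZ, Set.mem_setOf_eq, Set.mem_empty_iff_false, iff_false, hβ, hγ]
          intro h
          apply hα
          simpa using h
        simp [this]
      · -- β ≠ 0, γ = 0 : at most one i, inject via snd
        have : Z.ncard ≤ (Set.univ : Set (ZMod (q + 1))).ncard := by
          apply Set.ncard_le_ncard_of_injOn Prod.snd (fun _ _ => Set.mem_univ _)
          · intro x hx y hy hxy
            simp only [hZ, Set.mem_setOf_eq, hγ, zero_mul, add_zero] at hx hy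
            have h1 : β * (ζ ^ x.1.val * a) = β * (ζ ^ y.1.val * a) :=
              add_left_cancel (hx.trans hy.symm)
            have h2 : ζ ^ x.1.val = ζ ^ y.1.val :=
              mul_right_cancel₀ ha (mul_left_cancel₀ hβ h1)
            exact Prod.ext (hpow _ _ h2) hxy
        rwa [hcardZMod] at this
    · -- γ ≠ 0 : at most one j per i, inject via fst
      have : Z.ncard ≤ (Set.univ : Set (ZMod (q + 1))).ncard := by
        apply Set.ncard_le_ncard_of_injOn Prod.fst (fun _ _ => Set.mem_univ _)
        · intro x hx y hy hxy
          simp only [hZ, Set.mem_setOf_eq] at hx hy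
          rw [hxy] at hx
          have h1 : γ * (ζ ^ x.2.val * b) = γ * (ζ ^ y.2.val * b) :=
            add_left_cancel (hx.trans hy.symm)
          have h2 : ζ ^ x.2.val = ζ ^ y.2.val :=
            mul_right_cancel₀ hb (mul_left_cancel₀ hγ h1)
          exact Prod.ext hxy (hpow _ _ h2)
      rwa [hcardZMod] at this
  refine ⟨part1, ?_, ?_⟩
  · -- Part 2: linear map and injectivity
    set S : Set (F × F) := {p : F × F | ∃ i j : ℕ, p = (ζ ^ i * a, ζ ^ j * b)} with hS
    refine ⟨{ toFun := fun v p => v.1 + v.2.1 * (p : F × F).1 + v.2.2 * (p : F × F).2,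
              map_add' := by intro v w; funext p; simp; ring,
              map_smul' := by intro c v; funext p; simp; ring }, fun v p => rfl, ?_⟩
    rw [← LinearMap.ker_eq_bot, LinearMap.ker_eq_bot']
    intro v hv
    obtain ⟨α, β, γ⟩ := v
    by_contra hne0
    have hne : (α, β, γ) ≠ (0, 0, 0) := by
      intro h; apply hne0; rw [h]; rfl
    have hall : ∀ i j : ℕ, α + β * (ζ ^ i * a) + γ * (ζ ^ j * b) = 0 := by
      intro i j
      have hmem : ((ζ ^ i * a, ζ ^ j * b) : F × F) ∈ S := ⟨i, j, rfl⟩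
      have := congrFun hv ⟨(ζ ^ i * a, ζ ^ j * b), hmem⟩
      simpa using this
    have huniv : {ij : ZMod (q + 1) × ZMod (q + 1) |
        α + β * (ζ ^ ij.1.val * a) + γ * (ζ ^ ij.2.val * b) = 0} = Set.univ := by
      ext ij; simp [hall ij.1.val ij.2.val]
    have h1 := part1 α β γ hne
    rw [huniv, Set.ncard_univ, Nat.card_prod, Nat.card_zmod] at h1
    nlinarith
  · -- Part 3
    intro α β γ hne
    set Z : Set (ZMod (q + 1) × ZMod (q + 1)) :=
      {ij | α + β * (ζ ^ ij.1.val * a) + γ * (ζ ^ ij.2.val * b) = 0} with hZ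
    have h1 := part1 α β γ hne
    set f : ZMod (q + 1) × ZMod (q + 1) → F × F :=
      fun ij => (ζ ^ ij.1.val * a, ζ ^ ij.2.val * b) with hf
    have hfinj : Function.Injective f := by
      intro x y h
      rw [hf, Prod.mk.injEq] at h
      have h1' : ζ ^ x.1.val = ζ ^ y.1.val := mul_right_cancel₀ ha h.1
      have h2' : ζ ^ x.2.val = ζ ^ y.2.val := mul_right_cancel₀ hb h.2
      exact Prod.ext (hpow _ _ h1') (hpow _ _ h2')
    have himg : {p : F × F | (∃ i j : ℕ, p = (ζ ^ i * a, ζ ^ j * b)) ∧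
        α + β * p.1 + γ * p.2 ≠ 0} = f '' Zᶜ := by
      ext p
      constructor
      · rintro ⟨⟨i, j, rfl⟩, hnz⟩
        refine ⟨((i : ZMod (q + 1)), (j : ZMod (q + 1))), ?_, ?_⟩
        · simp only [Set.mem_compl_iff, hZ, Set.mem_setOf_eq]
          rw [ZMod.val_natCast, ZMod.val_natCast, hmod, hmod]
          simpa using hnz
        · simp only [hf]
          rw [ZMod.val_natCast, ZMod.val_natCast, hmod, hmod]
      · rintro ⟨ij, hij, rfl⟩
        refine ⟨⟨ij.1.val, ij.2.val, rfl⟩, ?_⟩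
        simp only [Set.mem_compl_iff, hZ, Set.mem_setOf_eq] at hij
        simpa [hf] using hij
    rw [himg, Set.ncard_image_of_injective _ hfinj]
    have hsum : Z.ncard + Zᶜ.ncard = Nat.card (ZMod (q + 1) × ZMod (q + 1)) :=
      Set.ncard_add_ncard_compl Z
    rw [Nat.card_prod, Nat.card_zmod] at hsum
    nlinarith
end

section
/- Let q be a prime power, let F be a finite field with q^2 elements, let ζ ∈ F be an element of multiplicative order q+1, and let a, b ∈ F be nonzero. Then the minimum, over all nonzero triples (α, β, γ) ∈ F^3, of the number of pairs (i, j) ∈ (Z/(q+1)Z) × (Z/(q+1)Z) with α + β ζ^i a + γ ζ^j b ≠ 0, equals q(q+1). -/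
/-- For a prime power `q`, `F = F_{q^2}`, `ζ ∈ F` of multiplicative order `q+1` and nonzero
`a, b ∈ F`, the minimum over nonzero triples `(α, β, γ)` of the number of pairs `(i, j)` with
`α + β ζ^i a + γ ζ^j b ≠ 0` equals `q(q+1)`. -/
theorem fermat_code_minimum_distance
    (q : ℕ) (hq : ∃ p n : ℕ, p.Prime ∧ 0 < n ∧ q = p ^ n)
    (F : Type*) [Field F] [Fintype F] (hcard : Fintype.card F = q ^ 2)
    (ζ : F) (hζ : orderOf ζ = q + 1) (a b : F) (ha : a ≠ 0) (hb : b ≠ 0) :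
    IsLeast {n : ℕ | ∃ α β γ : F, (α, β, γ) ≠ (0, 0, 0) ∧
        n = {ij : ZMod (q + 1) × ZMod (q + 1) |
          α + β * (ζ ^ ij.1.val * a) + γ * (ζ ^ ij.2.val * b) ≠ 0}.ncard}
      (q * (q + 1)) := by
  haveI : NeZero (q + 1) := ⟨Nat.succ_ne_zero q⟩
  -- ζ is nonzero
  have hζ0 : ζ ≠ 0 := by
    intro h
    have h1 : ζ ^ orderOf ζ = 1 := pow_orderOf_eq_one ζ
    rw [hζ, h, zero_pow (Nat.succ_ne_zero q)] at h1
    exact zero_ne_one h1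
  -- injectivity of powers of ζ on ZMod (q+1) values
  have hpow : ∀ m n : ZMod (q + 1), ζ ^ m.val = ζ ^ n.val → m = n := by
    intro m n h
    set u : Fˣ := Units.mk0 ζ hζ0 with hu
    have hou : orderOf u = q + 1 := by
      rw [← orderOf_units]; exact hζ
    have hum : u ^ m.val = u ^ n.val := by
      ext; push_cast; simpa [hu] using h
    have := pow_injOn_Iio_orderOf (x := u)
      (by rw [hou]; exact Set.mem_Iio.mpr (ZMod.val_lt m))
      (by rw [hou]; exact Set.mem_Iio.mpr (ZMod.val_lt n)) hum
    exact ZMod.val_injective _ this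
  constructor
  · -- membership: take (α, β, γ) = (-b, 0, 1)
    refine ⟨-b, 0, 1, by simp [hb], ?_⟩
    have hset : {ij : ZMod (q + 1) × ZMod (q + 1) |
        -b + 0 * (ζ ^ ij.1.val * a) + 1 * (ζ ^ ij.2.val * b) ≠ 0}
        = {ij : ZMod (q + 1) × ZMod (q + 1) | ij.2 ≠ 0} := by
      ext ij
      simp only [Set.mem_setOf_eq, zero_mul, one_mul, add_zero]
      constructor
      · intro h hj2
        apply h
        rw [hj2]
        simp
      · intro h h0
        apply h
        have : ζ ^ ij.2.val * b = b := by linear_combination h0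
        have hz1 : ζ ^ ij.2.val = 1 := by
          have h' : ζ ^ ij.2.val * b = 1 * b := by rw [one_mul]; exact this
          exact mul_right_cancel₀ hb h'
        have := hpow ij.2 0 (by simpa using hz1)
        exact this
    rw [hset]
    have : {ij : ZMod (q + 1) × ZMod (q + 1) | ij.2 ≠ 0}
        = (Set.univ : Set (ZMod (q + 1))) ×ˢ {j : ZMod (q + 1) | j ≠ 0} := by
      ext ij; simp
    rw [this, Set.ncard_eq_toFinset_card', Set.toFinset_prod, Finset.card_product]
    have h1 : (Set.univ : Set (ZMod (q + 1))).toFinset.card = q + 1 := by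
      simp [ZMod.card]
    have h2 : ({j : ZMod (q + 1) | j ≠ 0} : Set (ZMod (q + 1))).toFinset.card = q := by
      rw [Set.toFinset_setOf, Finset.filter_ne', Finset.card_erase_of_mem (Finset.mem_univ _)]
      simp [ZMod.card]
    rw [h1, h2]; ring
  · -- lower bound
    rintro n ⟨α, β, γ, hne, rfl⟩
    classical
    set Zf : Finset (ZMod (q + 1) × ZMod (q + 1)) :=
      Finset.univ.filter
        (fun ij => α + β * (ζ ^ ij.1.val * a) + γ * (ζ ^ ij.2.val * b) = 0) with hZf
    have hNcard : {ij : ZMod (q + 1) × ZMod (q + 1) |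
        α + β * (ζ ^ ij.1.val * a) + γ * (ζ ^ ij.2.val * b) ≠ 0}.ncard
        = (q + 1) * (q + 1) - Zf.card := by
      rw [Set.ncard_eq_toFinset_card']
      have : {ij : ZMod (q + 1) × ZMod (q + 1) |
          α + β * (ζ ^ ij.1.val * a) + γ * (ζ ^ ij.2.val * b) ≠ 0}.toFinset = Zfᶜ := by
        ext ij
        simp [hZf]
      rw [this, Finset.card_compl]
      congr 1
      simp [ZMod.card]
    have hZle : Zf.card ≤ q + 1 := by
      by_cases hγ : γ = 0
      · by_cases hβ : β = 0
        · -- α ≠ 0, Zf is empty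
          have hα : α ≠ 0 := by
            intro hα
            exact hne (by simp [hα, hβ, hγ])
          have : Zf = ∅ := by
            ext ij
            simp [hZf, hβ, hγ, hα]
          simp [this]
        · -- β ≠ 0: first components of elements of Zf are all equal
          have : Zf.card ≤ (Finset.univ : Finset (ZMod (q + 1))).card := by
            apply Finset.card_le_card_of_injOn Prod.snd (fun _ _ => Finset.mem_univ _)
            intro ij hij ij' hij' hsnd
            simp only [hZf, Finset.mem_coe, Finset.mem_filter] at hij hij'
            have h1 := hij.2
            have h2 := hij'.2
            rw [hγ] at h1 h2
            simp only [zero_mul, add_zero] at h1 h2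
            have : β * (ζ ^ ij.1.val * a) = β * (ζ ^ ij'.1.val * a) := by
              linear_combination h1 - h2
            have hz : ζ ^ ij.1.val = ζ ^ ij'.1.val := by
              have h' := mul_left_cancel₀ hβ this
              exact mul_right_cancel₀ ha h'
            exact Prod.ext (hpow _ _ hz) hsnd
          simpa [ZMod.card] using this
      · -- γ ≠ 0: second component determined by first
        have : Zf.card ≤ (Finset.univ : Finset (ZMod (q + 1))).card := by
          apply Finset.card_le_card_of_injOn Prod.fst (fun _ _ => Finset.mem_univ _)
          intro ij hij ij' hij' hfst
          simp only [hZf, Finset.mem_coe, Finset.mem_filter] at hij hij'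
          have h1 := hij.2
          have h2 := hij'.2
          rw [← hfst] at h2
          have : γ * (ζ ^ ij.2.val * b) = γ * (ζ ^ ij'.2.val * b) := by
            linear_combination h1 - h2
          have hz : ζ ^ ij.2.val = ζ ^ ij'.2.val := by
            have h' := mul_left_cancel₀ hγ this
            exact mul_right_cancel₀ hb h'
          exact Prod.ext hfst (hpow _ _ hz)
        simpa [ZMod.card] using this
    rw [hNcard]
    have hring : q * (q + 1) + (q + 1) = (q + 1) * (q + 1) := by ring
    omega
end

section
/- Let q be a prime power and let F be a finite field with q^4 elements. Then the number of x ∈ F satisfying (x^{q^2} + x)^{q+1} + 1 = 0 equals q^3 + q^2. -/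
open Finset Polynomial

lemma aux_card_root_le {F : Type*} [Field F] [Fintype F] [DecidableEq F]
    (P : F[X]) (hP : P ≠ 0) {d : ℕ} (hd : P.natDegree ≤ d)
    (s : Finset F) (hs : ∀ x ∈ s, P.eval x = 0) : s.card ≤ d := by
  refine (Polynomial.card_le_degree_of_subset_roots (p := P) (Z := s) ?_).trans hd
  intro x hx
  rw [Polynomial.mem_roots hP]
  exact hs x hx

lemma aux_poly1 {F : Type*} [Field F] (m : ℕ) (hm : 2 ≤ m) :
    (X ^ m + X : F[X]) ≠ 0 ∧ (X ^ m + X : F[X]).natDegree ≤ m := by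
  have hc : (X ^ m + X : F[X]).coeff m = 1 := by
    rw [Polynomial.coeff_add, Polynomial.coeff_X_pow, Polynomial.coeff_X,
      if_pos rfl, if_neg (by omega)]
    ring
  constructor
  · intro h
    rw [h] at hc
    simp at hc
  · exact (Polynomial.natDegree_add_le _ _).trans (by
      simp [Polynomial.natDegree_X_pow, Polynomial.natDegree_X]; omega)

lemma aux_poly2 {F : Type*} [Field F] (m : ℕ) (hm : 2 ≤ m) :
    (X ^ m - X : F[X]) ≠ 0 ∧ (X ^ m - X : F[X]).natDegree ≤ m := by
  have hc : (X ^ m - X : F[X]).coeff m = 1 := by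
    rw [Polynomial.coeff_sub, Polynomial.coeff_X_pow, Polynomial.coeff_X,
      if_pos rfl, if_neg (by omega)]
    ring
  constructor
  · intro h
    rw [h] at hc
    simp at hc
  · exact (Polynomial.natDegree_sub_le _ _).trans (by
      simp [Polynomial.natDegree_X_pow, Polynomial.natDegree_X]; omega)

lemma aux_poly3 {F : Type*} [Field F] (m : ℕ) (hm : 1 ≤ m) :
    (X ^ m + C 1 : F[X]) ≠ 0 ∧ (X ^ m + C 1 : F[X]).natDegree ≤ m := by
  have hc : (X ^ m + C 1 : F[X]).coeff m = 1 := by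
    rw [Polynomial.coeff_add, Polynomial.coeff_X_pow, Polynomial.coeff_C,
      if_pos rfl, if_neg (by omega)]
    ring
  constructor
  · intro h
    rw [h] at hc
    simp at hc
  · exact (Polynomial.natDegree_add_le _ _).trans (by
      simp [Polynomial.natDegree_X_pow])

lemma aux_sq (q : ℕ) (hq : 1 ≤ q) : q ^ 2 = (q + 1) * (q - 1) + 1 := by
  obtain ⟨k, rfl⟩ := Nat.exists_eq_add_of_le hq
  have h1 : (1 + k) ^ 2 = k * k + 2 * k + 1 := by ring
  rw [h1, Nat.add_sub_cancel_left]
  ring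

lemma aux_dvd1 (q : ℕ) (hq : 1 ≤ q) : (q + 1) ∣ q ^ 4 - 1 := by
  have h4 : 1 ≤ q ^ 4 := Nat.one_le_pow _ _ hq
  rw [← Int.natCast_dvd_natCast, Nat.cast_sub h4]
  push_cast
  exact ⟨(q : ℤ) ^ 3 - q ^ 2 + q - 1, by ring⟩

lemma aux_dvd2 (q : ℕ) (hq : 1 ≤ q) (hodd : Odd q) : 2 * (q + 1) ∣ q ^ 4 - 1 := by
  obtain ⟨k, rfl⟩ := hodd
  have h4 : 1 ≤ (2 * k + 1) ^ 4 := Nat.one_le_pow _ _ hq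
  rw [← Int.natCast_dvd_natCast, Nat.cast_sub h4]
  push_cast
  exact ⟨(k : ℤ) * ((2 * k + 1) ^ 2 + 1), by ring⟩

lemma aux_exists_orderOf {G : Type*} [Group G] [Finite G] [IsCyclic G] {d : ℕ}
    (hd : d ∣ Nat.card G) : ∃ g : G, orderOf g = d := by
  obtain ⟨g, hg⟩ := IsCyclic.exists_ofOrder_eq_natCard (α := G)
  refine ⟨g ^ (orderOf g / d), ?_⟩
  exact orderOf_pow_orderOf_div (by rw [hg]; exact Nat.card_pos.ne') (by rw [hg]; exact hd)


/-- For a prime power `q` and `F = F_{q^4}`, the number of solutions `x ∈ F` of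
`(x^{q^2} + x)^{q+1} + 1 = 0` equals `q^3 + q^2`. -/
theorem count_solutions_trace_norm_equation
    (q : ℕ) (hq : ∃ p n : ℕ, p.Prime ∧ 0 < n ∧ q = p ^ n)
    (F : Type*) [Field F] [Fintype F] (hcard : Fintype.card F = q ^ 4) :
    {x : F | (x ^ (q ^ 2) + x) ^ (q + 1) + 1 = 0}.ncard = q ^ 3 + q ^ 2 := by
  classical
  obtain ⟨p, n, hp, hn, hqpn⟩ := hq
  haveI : Fact p.Prime := ⟨hp⟩
  have hq2 : 2 ≤ q := by
    rw [hqpn]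
    calc 2 = 2 ^ 1 := rfl
    _ ≤ p ^ n := Nat.pow_le_pow_left hp.two_le n |>.trans' (Nat.pow_le_pow_right (by omega) hn) |>.trans le_rfl
  -- characteristic
  haveI hcharF : CharP F p := by
    obtain ⟨m, _, hm⟩ := FiniteField.card F (ringChar F)
    have hdvd : p ∣ ringChar F ^ (m : ℕ) := by
      rw [← hm, hcard, hqpn, ← pow_mul]
      exact dvd_pow_self p (by positivity)
    have := (Nat.prime_dvd_prime_iff_eq hp (CharP.char_is_prime F (ringChar F))).mp
      (hp.dvd_of_dvd_pow hdvd)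
    rw [this]
    exact ringChar.charP F
  have hq2pow : q ^ 2 = p ^ (2 * n) := by rw [hqpn, ← pow_mul, Nat.mul_comm]
  -- the additive map f
  set f : F → F := fun x => x ^ (q ^ 2) + x with hf
  have hadd : ∀ a b : F, f (a + b) = f a + f b := by
    intro a b
    simp only [hf, hq2pow]
    rw [add_pow_char_pow]
    ring
  have hpow4 : ∀ x : F, x ^ (q ^ 4) = x := by
    intro x; rw [← hcard]; exact FiniteField.pow_card x
  have hfix : ∀ x : F, (f x) ^ (q ^ 2) = f x := by
    intro x
    simp only [hf]
    rw [hq2pow, add_pow_char_pow, ← hq2pow, ← pow_mul, ← pow_add]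
    rw [show (2 + 2) = 4 from rfl, hpow4 x, add_comm]
  have hf0 : f 0 = 0 := by
    simp only [hf]
    rw [zero_pow (by positivity), add_zero]
  set K : Finset F := univ.filter fun x => f x = 0 with hK
  set Rf : Finset F := univ.image f with hRf
  set T : Finset F := univ.filter fun t : F => t ^ (q ^ 2) = t with hT
  set E : Finset F := univ.filter fun t : F => t ^ (q + 1) + 1 = 0 with hE
  -- fibers of f all have size K.card
  have hfiber : ∀ t : F, (∃ a, f a = t) →
      (univ.filter fun x => f x = t).card = K.card := by
    rintro t ⟨a, ha⟩
    symm
    apply Finset.card_bij (fun k _ => a + k)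
    · intro k hk
      simp only [hK, Finset.mem_filter, Finset.mem_univ, true_and] at hk ⊢
      rw [hadd, hk, add_zero, ha]
    · intro k1 h1 k2 h2 h
      exact add_left_cancel h
    · intro x hx
      simp only [Finset.mem_filter, Finset.mem_univ, true_and] at hx
      refine ⟨x - a, ?_, by ring⟩
      simp only [hK, Finset.mem_filter, Finset.mem_univ, true_and]
      have := hadd (x - a) a
      rw [sub_add_cancel, hx, ha] at this
      linear_combination -this
  -- total count
  have htot : q ^ 4 = Rf.card * K.card := by
    have h1 : (univ : Finset F).card = ∑ t ∈ Rf, (univ.filter fun x => f x = t).card :=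
      Finset.card_eq_sum_card_fiberwise (fun x _ => Finset.mem_image_of_mem f (Finset.mem_univ x))
    rw [Finset.card_univ, hcard] at h1
    rw [h1, Finset.sum_congr rfl fun t ht => hfiber t (by
      simpa only [hRf, Finset.mem_image, Finset.mem_univ, true_and] using ht),
      Finset.sum_const, smul_eq_mul]
  -- upper bounds
  have hK_le : K.card ≤ q ^ 2 := by
    obtain ⟨hne, hdeg⟩ := aux_poly1 (F := F) (q ^ 2) (by nlinarith)
    refine aux_card_root_le _ hne hdeg K ?_
    intro x hx
    simp only [hK, Finset.mem_filter, Finset.mem_univ, true_and, hf] at hx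
    simp [hx]
  have hT_le : T.card ≤ q ^ 2 := by
    obtain ⟨hne, hdeg⟩ := aux_poly2 (F := F) (q ^ 2) (by nlinarith)
    refine aux_card_root_le _ hne hdeg T ?_
    intro x hx
    simp only [hT, Finset.mem_filter, Finset.mem_univ, true_and] at hx
    simp [hx]
  have hR_sub_T : Rf ⊆ T := by
    intro t ht
    simp only [hRf, Finset.mem_image, Finset.mem_univ, true_and] at ht
    obtain ⟨x, rfl⟩ := ht
    simp only [hT, Finset.mem_filter, Finset.mem_univ, true_and]
    exact hfix x
  have hR_le : Rf.card ≤ q ^ 2 := (Finset.card_le_card hR_sub_T).trans hT_le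
  -- equalities
  have hq2pos : 0 < q ^ 2 := by positivity
  have h1 : q ^ 2 * q ^ 2 ≤ q ^ 2 * K.card := by
    calc q ^ 2 * q ^ 2 = Rf.card * K.card := by rw [← htot]; ring
    _ ≤ q ^ 2 * K.card := Nat.mul_le_mul_right _ hR_le
  have hKcard : K.card = q ^ 2 :=
    le_antisymm hK_le (Nat.le_of_mul_le_mul_left h1 hq2pos)
  have hRcard : Rf.card = q ^ 2 := by
    have : Rf.card * K.card = q ^ 2 * K.card := by
      rw [← htot, hKcard]; ring
    exact Nat.eq_of_mul_eq_mul_right (hKcard ▸ hq2pos) this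
  have hRT : Rf = T :=
    Finset.eq_of_subset_of_card_le hR_sub_T (hT_le.trans_eq hRcard.symm)
  -- oddness
  have hoddq : (-1 : F) ≠ 1 → Odd q := by
    intro h2
    have hp2 : p ≠ 2 := by
      rintro rfl
      apply h2
      have h20 : (2 : F) = 0 := by exact_mod_cast CharP.cast_eq_zero F 2
      linear_combination -h20
    rw [hqpn]
    exact (hp.odd_of_ne_two hp2).pow
  have hneg1pow : (-1 : F) ^ (q - 1) = 1 := by
    by_cases h2 : (-1 : F) = 1
    · rw [h2, one_pow]
    · exact Even.neg_one_pow (Nat.Odd.sub_odd (hoddq h2) odd_one)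
  have hE_sub_T : E ⊆ T := by
    intro t ht
    simp only [hE, Finset.mem_filter, Finset.mem_univ, true_and] at ht
    have ht' : t ^ (q + 1) = -1 := by linear_combination ht
    simp only [hT, Finset.mem_filter, Finset.mem_univ, true_and]
    calc t ^ (q ^ 2) = (t ^ (q + 1)) ^ (q - 1) * t := by
          rw [← pow_mul, ← pow_succ, ← aux_sq q (by omega)]
    _ = (-1 : F) ^ (q - 1) * t := by rw [ht']
    _ = t := by rw [hneg1pow, one_mul]
  -- units
  have hcardu : Nat.card Fˣ = q ^ 4 - 1 := by
    rw [Nat.card_eq_fintype_card, Fintype.card_units, hcard]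
  have hd1 : (q + 1) ∣ Nat.card Fˣ := by rw [hcardu]; exact aux_dvd1 q (by omega)
  obtain ⟨ζ, hζ⟩ := aux_exists_orderOf hd1
  have hζ1 : (ζ : F) ^ (q + 1) = 1 := by
    have h := pow_orderOf_eq_one ζ
    rw [hζ] at h
    have := congrArg Units.val h
    push_cast at this
    exact this
  -- exists s with s^(q+1) = -1
  have hs : ∃ s : F, s ^ (q + 1) = -1 := by
    by_cases h2 : (-1 : F) = 1
    · exact ⟨1, by rw [one_pow, h2]⟩
    · have hd2 : 2 * (q + 1) ∣ Nat.card Fˣ := by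
        rw [hcardu]; exact aux_dvd2 q (by omega) (hoddq h2)
      obtain ⟨u, hu⟩ := aux_exists_orderOf hd2
      refine ⟨(u : F), ?_⟩
      have h2' : (u ^ (q + 1)) * (u ^ (q + 1)) = 1 := by
        rw [← pow_add, show (q + 1) + (q + 1) = 2 * (q + 1) by ring, ← hu]
        exact pow_orderOf_eq_one u
      have hne : (u : F) ^ (q + 1) ≠ 1 := by
        intro h
        have hu1 : u ^ (q + 1) = 1 := Units.ext (by push_cast; exact h)
        have := Nat.le_of_dvd (by omega) (hu ▸ orderOf_dvd_of_pow_eq_one hu1)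
        omega
      have h2F : ((u : F) ^ (q + 1)) * ((u : F) ^ (q + 1)) = 1 := by
        have := congrArg Units.val h2'
        push_cast at this
        exact this
      rcases mul_self_eq_one_iff.mp h2F with h | h
      · exact absurd h hne
      · exact h
  -- E has exactly q+1 elements
  have hE_le : E.card ≤ q + 1 := by
    obtain ⟨hne, hdeg⟩ := aux_poly3 (F := F) (q + 1) (by omega)
    refine aux_card_root_le _ hne hdeg E ?_
    intro x hx
    simp only [hE, Finset.mem_filter, Finset.mem_univ, true_and] at hx
    simp [hx]
  have hE_ge : q + 1 ≤ E.card := by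
    obtain ⟨s, hsval⟩ := hs
    have hs0 : s ≠ 0 := by
      intro h
      rw [h, zero_pow (by omega)] at hsval
      exact one_ne_zero (α := F) (by linear_combination hsval)
    have hle := Finset.card_le_card_of_injOn (f := fun i => s * (ζ : F) ^ i)
      (s := Finset.range (q + 1)) (t := E) ?_ ?_
    · simpa using hle
    · intro i hi
      simp only [hE, Finset.mem_coe, Finset.mem_filter, Finset.mem_univ, true_and]
      rw [mul_pow, hsval, ← pow_mul, mul_comm i (q + 1), pow_mul, hζ1, one_pow, mul_one]
      ring
    · intro i hi j hj hij
      simp only [Finset.coe_range, Set.mem_Iio] at hi hj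
      have hzz : (ζ : F) ^ i = (ζ : F) ^ j := mul_left_cancel₀ hs0 hij
      have hzz' : ζ ^ i = ζ ^ j := Units.ext (by push_cast; exact hzz)
      exact pow_injOn_Iio_orderOf (by simp only [hζ, Set.mem_Iio]; exact hi) (by simp only [hζ, Set.mem_Iio]; exact hj) hzz'
  have hEcard : E.card = q + 1 := le_antisymm hE_le hE_ge
  -- final count
  have hE_sub_R : E ⊆ Rf := hRT ▸ hE_sub_T
  set S : Finset F := univ.filter (fun x : F => f x ∈ E) with hS
  have hScount : S.card = ∑ t ∈ E, (S.filter fun x => f x = t).card :=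
    Finset.card_eq_sum_card_fiberwise (fun x hx => by
      change x ∈ S at hx
      simp only [hS, Finset.mem_filter] at hx
      exact hx.2)
  have hfib_eq : ∀ t ∈ E, (S.filter fun x => f x = t).card = q ^ 2 := by
    intro t ht
    have h1 : S.filter (fun x => f x = t) = univ.filter fun x => f x = t := by
      ext y
      simp only [hS, Finset.filter_filter, Finset.mem_filter, Finset.mem_univ, true_and]
      constructor
      · rintro ⟨_, h⟩
        exact h
      · intro h
        exact ⟨by rwa [h], h⟩
    rw [h1, hfiber t ?_, hKcard]
    have hm := hE_sub_R ht
    simp only [hRf, Finset.mem_image, Finset.mem_univ, true_and] at hm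
    exact hm
  have hScard : S.card = q ^ 3 + q ^ 2 := by
    rw [hScount, Finset.sum_congr rfl hfib_eq, Finset.sum_const, smul_eq_mul, hEcard]
    ring
  have hset : {x : F | (x ^ (q ^ 2) + x) ^ (q + 1) + 1 = 0} = ↑S := by
    ext x
    simp only [hS, hE, Set.mem_setOf_eq, Finset.coe_filter, Finset.mem_filter,
      Finset.mem_univ, true_and, Set.mem_setOf_eq, hf]
  rw [hset, Set.ncard_coe_finset, hScard]
end
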